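/- Splitting a convex polygon along a diagonal: if S is a set of points each of which is extremal in its convex hull, and a, b ∈ S, then the convex hull of S is contained in the union of the convex hull of {x ∈ S | σ(a,b,x) ≠ ccw} and the convex hull of {x ∈ S | σ(a,b,x) ≠ cw}. -/

import Mathlib

abbrev Point : Type := EuclideanSpace ℝ (Fin 2)

noncomputable def Point.x (p : Point) : ℝ := p 0
noncomputable def Point.y (p : Point) : ℝ := p 1

noncomputable def Point.mk' (a b : ℝ) : Point := WithLp.toLp 2 ![a, b]

inductive Orient : Type where
  | cw
  | ccw
  | collinear
deriving DecidableEq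

def Orient.neg : Orient → Orient
  | .cw => .ccw
  | .ccw => .cw
  | .collinear => .collinear

noncomputable def σ (p q r : Point) : Orient :=
  let det := Matrix.det !![p.x, q.x, r.x; p.y, q.y, r.y; 1, 1, 1]
  if 0 < det then .ccw
  else if det < 0 then .cw
  else .collinear

def EmptyShapeIn (S P : Set Point) : Prop :=
  ∀ p ∈ P \ S, p ∉ convexHull ℝ S

def ConvexPoints (S : Set Point) : Prop :=
  ∀ a ∈ S, a ∉ convexHull ℝ (S \ {a})

def ConvexEmptyIn (S P : Set Point) : Prop :=
  ConvexPoints S ∧ EmptyShapeIn S P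

def HasEmptyKGon (k : ℕ) (S : Set Point) : Prop :=
  ∃ s : Finset Point, s.card = k ∧ ↑s ⊆ S ∧ ConvexEmptyIn ↑s S

def PtInTriangle (a p q r : Point) : Prop :=
  a ∈ convexHull ℝ {p, q, r}

def σPtInTriangle (a p q r : Point) : Prop :=
  σ p q a = σ p q r ∧ σ p a r = σ p q r ∧ σ a q r = σ p q r

def σIsEmptyTriangleFor (a b c : Point) (S : Set Point) : Prop :=
  ∀ s ∈ S, ¬σPtInTriangle s a b c

def σHasEmptyKGon (k : ℕ) (S : Set Point) : Prop :=
  ∃ s : Finset Point, s.card = k ∧ ↑s ⊆ S ∧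
    ∀ a ∈ s, ∀ b ∈ s, ∀ c ∈ s, a ≠ b → a ≠ c → b ≠ c → σIsEmptyTriangleFor a b c S

def InGenPos₃ (p q r : Point) : Prop := σ p q r ≠ .collinear

def InGenPos₄ (p q r s : Point) : Prop :=
  InGenPos₃ p q r ∧ InGenPos₃ p q s ∧ InGenPos₃ p r s ∧ InGenPos₃ q r s

def ListInGenPos (l : List Point) : Prop :=
  ∀ p q r : Point, [p, q, r].Sublist l → InGenPos₃ p q r

def Sorted₄ (p q r s : Point) : Prop :=
  p.x < q.x ∧ q.x < r.x ∧ r.x < s.x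

noncomputable def ptSlope (a b : Point) : ℝ := (b.y - a.y) / (b.x - a.x)

noncomputable def detp (a b x : Point) : ℝ :=
  (b.x - a.x) * (x.y - a.y) - (b.y - a.y) * (x.x - a.x)

lemma det_eq (a b x : Point) :
    Matrix.det !![a.x, b.x, x.x; a.y, b.y, x.y; 1, 1, 1] = detp a b x := by
  simp [Matrix.det_fin_three, detp]; ring

lemma σ_ne_ccw_iff (a b x : Point) : σ a b x ≠ .ccw ↔ detp a b x ≤ 0 := by
  rw [σ]; simp only [det_eq]
  split_ifs with h1 h2 <;> simp_all <;> linarith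

lemma σ_ne_cw_iff (a b x : Point) : σ a b x ≠ .cw ↔ 0 ≤ detp a b x := by
  rw [σ]; simp only [det_eq]
  split_ifs with h1 h2 <;> simp_all <;> linarith

lemma detp_self_left (a b : Point) : detp a b a = 0 := by unfold detp; ring

lemma detp_self_right (a b : Point) : detp a b b = 0 := by unfold detp; ring

lemma detp_combo (a b u v : Point) {t1 t2 : ℝ} (h : t1 + t2 = 1) :
    detp a b (t1 • u + t2 • v) = t1 * detp a b u + t2 * detp a b v := by
  have h' : t2 = 1 - t1 := by linarith
  subst h'
  simp [detp, Point.x, Point.y, PiLp.add_apply, PiLp.smul_apply, smul_eq_mul]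
  ring

lemma pt_ext {p q : Point} (h0 : p 0 = q 0) (h1 : p 1 = q 1) : p = q := by
  ext i; fin_cases i <;> assumption


lemma mid_not {S : Set Point} (cvx : ConvexPoints S) {p q : Point} (hp : p ∈ S) (hq : q ∈ S)
    (hpq : p ≠ q) {w : Point} (hw : w ∈ convexHull ℝ S) {r : ℝ} (h0 : 0 < r) (h1 : r < 1)
    (heq : q = r • w + (1 - r) • p) : False := by
  have hSins : S = insert q (S \ {q}) := by
    rw [Set.insert_diff_singleton, Set.insert_eq_of_mem hq]
  have hne : (S \ {q}).Nonempty := ⟨p, hp, hpq⟩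
  rw [hSins, convexHull_insert hne, mem_convexJoin] at hw
  obtain ⟨x, hx, w', hw', hseg⟩ := hw
  rw [Set.mem_singleton_iff] at hx
  rw [hx] at hseg
  obtain ⟨s1, s2, hs1, hs2, hs12, hweq⟩ := hseg
  have hpmem : p ∈ convexHull ℝ (S \ {q}) := subset_convexHull ℝ _ ⟨hp, hpq⟩
  have hd : 0 < r * s2 + (1 - r) := by nlinarith
  have h2 : q = r • (s1 • q + s2 • w') + (1 - r) • p := by rw [hweq]; exact heq
  have key : (r * s2 + (1 - r)) • q = (r * s2) • w' + (1 - r) • p := by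
    have h3 : s1 = 1 - s2 := by linarith
    subst h3
    linear_combination (norm := module) h2
  have hqeq : q = ((r * s2) / (r * s2 + (1 - r))) • w' + ((1 - r) / (r * s2 + (1 - r))) • p := by
    have h4 := congrArg (fun y : Point => (r * s2 + (1 - r))⁻¹ • y) key
    simp only [smul_add, smul_smul, inv_mul_cancel₀ hd.ne', one_smul] at h4
    rw [div_eq_inv_mul, div_eq_inv_mul]
    exact h4
  have hsum : (r * s2) / (r * s2 + (1 - r)) + (1 - r) / (r * s2 + (1 - r)) = 1 := by
    field_simp
  exact cvx q hq (hqeq ▸ (convex_convexHull ℝ (S \ {q})) hw' hpmem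
    (div_nonneg (mul_nonneg h0.le hs2) hd.le) (div_nonneg (by linarith) hd.le) hsum)

lemma chord {S : Set Point} (cvx : ConvexPoints S) {a b : Point} (ha : a ∈ S) (hb : b ∈ S)
    (hab : a ≠ b) {w : Point} (hw : w ∈ convexHull ℝ S) (hdet : detp a b w = 0) :
    w ∈ segment ℝ a b := by
  -- find μ with w = (1-μ)•a + μ•b
  have hxy : a.x ≠ b.x ∨ a.y ≠ b.y := by
    by_contra h
    push_neg at h
    exact hab (pt_ext h.1 h.2)
  obtain ⟨μ, hμ1, hμ2⟩ : ∃ μ : ℝ, w.x - a.x = μ * (b.x - a.x) ∧ w.y - a.y = μ * (b.y - a.y) := by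
    unfold detp at hdet
    rcases hxy with h | h
    · refine ⟨(w.x - a.x) / (b.x - a.x), by field_simp [sub_ne_zero.2 (Ne.symm h)], ?_⟩
      field_simp [sub_ne_zero.2 (Ne.symm h)]
      nlinarith [hdet]
    · refine ⟨(w.y - a.y) / (b.y - a.y), ?_, by field_simp [sub_ne_zero.2 (Ne.symm h)]⟩
      field_simp [sub_ne_zero.2 (Ne.symm h)]
      nlinarith [hdet]
  have hweq : w = (1 - μ) • a + μ • b := by
    apply pt_ext <;>
      simp only [PiLp.add_apply, PiLp.smul_apply, smul_eq_mul] <;>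
      [skip; skip]
    · have := hμ1; unfold Point.x at this; linarith
    · have := hμ2; unfold Point.y at this; linarith
  by_cases h0 : 0 ≤ μ
  · by_cases h1 : μ ≤ 1
    · exact ⟨1 - μ, μ, by linarith, h0, by ring, hweq.symm⟩
    · push_neg at h1
      exfalso
      apply mid_not cvx ha hb hab hw (r := 1/μ) (by rw [one_div]; exact inv_pos.2 (by linarith)) (by rw [div_lt_one (by linarith)]; linarith)
      rw [hweq, smul_add, smul_smul, smul_smul]
      have hμ : μ ≠ 0 := by linarith
      have e1 : 1/μ * (1 - μ) = 1/μ - 1 := by field_simp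
      have e2 : 1/μ * μ = 1 := by field_simp
      rw [e1, e2, one_smul]
      module
  · push_neg at h0
    exfalso
    apply mid_not cvx hb ha hab.symm hw (r := 1/(1-μ)) (by rw [one_div]; exact inv_pos.2 (by linarith))
      (by rw [div_lt_one (by linarith)]; linarith)
    rw [hweq, smul_add, smul_smul, smul_smul]
    have hμ : (1:ℝ) - μ ≠ 0 := by linarith
    have e1 : 1/(1-μ) * (1 - μ) = 1 := by field_simp
    have e2 : 1/(1-μ) * μ = 1 - 1/(1-μ) - (1 - 1/(1-μ)) + 1/(1-μ) * μ := by ring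
    rw [e1, one_smul]
    have e3 : (1:ℝ) - 1/(1-μ) = -μ/(1-μ) := by field_simp; ring
    rw [e3]
    have e4 : 1/(1-μ) * μ = -(-μ/(1-μ)) := by field_simp
    rw [e4, neg_smul, ← sub_eq_add_neg]
    -- goal: a = a + (-μ/(1-μ)) • b - (-μ/(1-μ)) • b ... check
    module

lemma half (g : Point → ℝ)
    (hg : ∀ (t1 t2 : ℝ) (u v : Point), t1 + t2 = 1 → g (t1 • u + t2 • v) = t1 * g u + t2 * g v)
    (A B : Set Point) (hA : ∀ x ∈ A, g x ≤ 0) (hB : ∀ x ∈ B, 0 ≤ g x)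
    (hAne : A.Nonempty) (hBne : B.Nonempty)
    (hchord : ∀ w ∈ convexHull ℝ (A ∪ B), g w = 0 → w ∈ convexHull ℝ A)
    {z : Point} (hz : z ∈ convexHull ℝ (A ∪ B)) (hzg : g z ≤ 0) : z ∈ convexHull ℝ A := by
  have hAg : ∀ x ∈ convexHull ℝ A, g x ≤ 0 := by
    intro x hx
    refine convexHull_min hA ?_ hx
    intro p hp q hq t1 t2 ht1 ht2 ht
    have hp' : g p ≤ 0 := hp
    have hq' : g q ≤ 0 := hq
    show g (t1 • p + t2 • q) ≤ 0
    rw [hg t1 t2 p q ht]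
    nlinarith
  have hBg : ∀ x ∈ convexHull ℝ B, 0 ≤ g x := by
    intro x hx
    refine convexHull_min hB ?_ hx
    intro p hp q hq t1 t2 ht1 ht2 ht
    have hp' : 0 ≤ g p := hp
    have hq' : 0 ≤ g q := hq
    show 0 ≤ g (t1 • p + t2 • q)
    rw [hg t1 t2 p q ht]
    nlinarith
  have hzu := hz
  rw [convexHull_union hAne hBne, mem_convexJoin] at hzu
  obtain ⟨u, hu, v, hv, t1, t2, ht1, ht2, ht, hzeq⟩ := hzu
  have hgu := hAg u hu
  have hgv := hBg v hv
  have huS : u ∈ convexHull ℝ (A ∪ B) := convexHull_mono Set.subset_union_left hu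
  have hvS : v ∈ convexHull ℝ (A ∪ B) := convexHull_mono Set.subset_union_right hv
  by_cases hv0 : g v ≤ 0
  · have : v ∈ convexHull ℝ A := hchord v hvS (le_antisymm hv0 hgv)
    rw [← hzeq]
    exact (convex_convexHull ℝ A) hu this ht1 ht2 ht
  · push_neg at hv0
    by_cases hu0 : g u = 0
    · have hgz : g z = t1 * g u + t2 * g v := by rw [← hzeq]; exact hg t1 t2 u v ht
      have ht2' : t2 = 0 := by nlinarith
      have : z = u := by rw [← hzeq, ht2', zero_smul, add_zero, show t1 = 1 by linarith, one_smul]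
      rw [this]; exact hu
    · have hu0' : g u < 0 := lt_of_le_of_ne hgu hu0
      set r := -g u / (g v - g u) with hr
      have hden : 0 < g v - g u := by linarith
      have hr0 : 0 < r := by apply div_pos <;> linarith
      have hr1 : r < 1 := by rw [div_lt_one hden]; linarith
      set w := (1 - r) • u + r • v with hwdef
      have hgw : g w = 0 := by
        rw [hwdef, hg (1 - r) r u v (by ring), hr]
        field_simp
        ring
      have hwS : w ∈ convexHull ℝ (A ∪ B) :=
        (convex_convexHull ℝ (A ∪ B)) huS hvS (by linarith) hr0.le (by ring)
      have hwA : w ∈ convexHull ℝ A := hchord w hwS hgw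
      have hgz : g z = t1 * g u + t2 * g v := by rw [← hzeq]; exact hg t1 t2 u v ht
      have ht2r : t2 ≤ r := by
        rw [hr, le_div_iff₀ hden]
        nlinarith
      set s := t2 / r with hs
      have hs0 : 0 ≤ s := div_nonneg ht2 hr0.le
      have hs1 : s ≤ 1 := by rw [hs, div_le_one hr0]; exact ht2r
      have hsr : s * r = t2 := div_mul_cancel₀ t2 hr0.ne'
      have hzw : z = (1 - s) • u + s • w := by
        rw [← hzeq, hwdef, smul_add, smul_smul, smul_smul, ← add_assoc, ← add_smul, hsr]
        congr 1
        congr 1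
        linarith [hsr]
      rw [hzw]
      exact (convex_convexHull ℝ A) hu hwA (by linarith) hs0 (by ring)

theorem split_convexHull {S : Set Point} (cvx : ConvexPoints S) :
    ∀ {a b : Point}, a ∈ S → b ∈ S →
      convexHull ℝ S ⊆ convexHull ℝ {x ∈ S | σ a b x ≠ .ccw}
                      ∪ convexHull ℝ {x ∈ S | σ a b x ≠ .cw} := by
  intro a b ha hb z hz
  by_cases hab : a = b
  · left
    refine convexHull_mono ?_ hz
    intro x hx
    refine ⟨hx, ?_⟩
    rw [σ_ne_ccw_iff]
    subst hab
    exact le_of_eq (by unfold detp; ring)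
  · set A := {x ∈ S | σ a b x ≠ Orient.ccw} with hAdef
    set B := {x ∈ S | σ a b x ≠ Orient.cw} with hBdef
    have hSAB : S = A ∪ B := by
      ext x
      constructor
      · intro hx
        by_cases h : σ a b x = .ccw
        · right; exact ⟨hx, by simp [h]⟩
        · left; exact ⟨hx, h⟩
      · rintro (⟨h, -⟩ | ⟨h, -⟩) <;> exact h
    have haA : a ∈ A := ⟨ha, by rw [σ_ne_ccw_iff]; exact le_of_eq (detp_self_left a b)⟩
    have hbA : b ∈ A := ⟨hb, by rw [σ_ne_ccw_iff]; exact le_of_eq (detp_self_right a b)⟩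
    have haB : a ∈ B := ⟨ha, by rw [σ_ne_cw_iff]; exact le_of_eq (detp_self_left a b).symm⟩
    have hbB : b ∈ B := ⟨hb, by rw [σ_ne_cw_iff]; exact le_of_eq (detp_self_right a b).symm⟩
    have hAle : ∀ x ∈ A, detp a b x ≤ 0 := fun x hx => (σ_ne_ccw_iff a b x).1 hx.2
    have hBge : ∀ x ∈ B, 0 ≤ detp a b x := fun x hx => (σ_ne_cw_iff a b x).1 hx.2
    have hchordA : ∀ w ∈ convexHull ℝ (A ∪ B), detp a b w = 0 → w ∈ convexHull ℝ A := by
      intro w hw h0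
      have : w ∈ segment ℝ a b := chord cvx ha hb hab (by rwa [hSAB]) h0
      exact (convex_convexHull ℝ A).segment_subset
        (subset_convexHull ℝ A haA) (subset_convexHull ℝ A hbA) this
    have hchordB : ∀ w ∈ convexHull ℝ (B ∪ A), detp a b w = 0 → w ∈ convexHull ℝ B := by
      intro w hw h0
      rw [Set.union_comm] at hw
      have : w ∈ segment ℝ a b := chord cvx ha hb hab (by rwa [hSAB]) h0
      exact (convex_convexHull ℝ B).segment_subset
        (subset_convexHull ℝ B haB) (subset_convexHull ℝ B hbB) this
    rw [hSAB] at hz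
    by_cases hz0 : detp a b z ≤ 0
    · left
      exact half (detp a b) (fun t1 t2 u v h => detp_combo a b u v h) A B hAle hBge
        ⟨a, haA⟩ ⟨a, haB⟩ hchordA hz hz0
    · right
      push_neg at hz0
      refine half (fun x => -(detp a b x))
        (fun t1 t2 u v h => by rw [detp_combo a b u v h]; ring) B A
        (fun x hx => by simpa using hBge x hx) (fun x hx => by simpa using hAle x hx)
        ⟨a, haB⟩ ⟨a, haA⟩
        (fun w hw h0 => hchordB w hw (by linarith [neg_eq_zero.1 h0]))
        ?_ (by simpa using hz0.le)
      rwa [Set.union_comm]
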